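/- arXiv:2003.09789 — 6 statements merged into one kernel-verified Lean document; each statement's English description precedes it below -/
import Mathlib

section
/- Consider one step of an s-stage Runge–Kutta discretization of the variational system, δ_{n+1} = δ_n + h Σ_i b_i d_i with d_i = J_i Δ_i, Δ_i = δ_n + h Σ_j a_{ij} d_j, and one step of an s-stage RK discretization of the adjoint system, λ_{n+1} = λ_n + h Σ_i B_i l_i with l_i = -J_i^⊤ Λ_i, Λ_i = λ_n + h Σ_j A_{ij} l_j, using the same matrices J_i. If B_i = b_i for all i and b_i A_{ij} + B_j a_{ji} = b_i B_j for all i,j, then λ_{n+1}^⊤ δ_{n+1} = λ_n^⊤ δ_n. -/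
/-!
Substituting the internal stages `λₙ = Λᵢ - h ∑ⱼ Aᵢⱼ lⱼ` and `δₙ = Δᵢ - h ∑ⱼ aᵢⱼ dⱼ` writes the
change of `λ ⬝ δ` over one step as `h ∑ᵢ (bᵢ Λᵢ ⬝ dᵢ + Bᵢ lᵢ ⬝ Δᵢ)` plus `h²` times a double sum
of the `lᵢ ⬝ dⱼ` with coefficients `Bᵢ bⱼ - bⱼ Aⱼᵢ - Bᵢ aᵢⱼ`. When `B = b` the first sum vanishes
stage by stage, since `Λᵢ ⬝ JᵢΔᵢ = Jᵢᵀ Λᵢ ⬝ Δᵢ`; the coefficients of the second vanish by the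
adjointness condition.
-/

open Matrix Finset

section

variable {R ι n : Type*} [CommRing R] [Fintype ι] [Fintype n]

theorem sum_smul_dotProduct (c : ι → R) (u : ι → n → R) (w : n → R) :
    (∑ i, c i • u i) ⬝ᵥ w = ∑ i, c i * (u i ⬝ᵥ w) := by
  simp only [sum_dotProduct, smul_dotProduct, smul_eq_mul]

theorem dotProduct_sum_smul (w : n → R) (c : ι → R) (v : ι → n → R) :
    w ⬝ᵥ ∑ j, c j • v j = ∑ j, c j * (w ⬝ᵥ v j) := by
  simp only [dotProduct_sum, dotProduct_smul, smul_eq_mul]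

theorem sum_smul_dotProduct_sum_smul (c c' : ι → R) (u v : ι → n → R) :
    (∑ i, c i • u i) ⬝ᵥ ∑ j, c' j • v j = ∑ i, ∑ j, c i * c' j * (u i ⬝ᵥ v j) := by
  rw [sum_smul_dotProduct]
  simp only [dotProduct_sum_smul, mul_sum, mul_assoc]

theorem add_smul_dotProduct_add_smul (h : R) (x y u v : n → R) :
    (x + h • u) ⬝ᵥ (y + h • v) = x ⬝ᵥ y + h * (x ⬝ᵥ v + u ⬝ᵥ y) + h ^ 2 * (u ⬝ᵥ v) := by
  simp only [add_dotProduct, dotProduct_add, smul_dotProduct, dotProduct_smul, smul_eq_mul]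
  ring

theorem dotProduct_rk_step_sub (h : R) (a A : ι → ι → R) (b B : ι → R)
    (δ δ' μ μ' : n → R) (dk Δ l Λ : ι → n → R)
    (hδ : δ' = δ + h • ∑ i, b i • dk i) (hΔ : ∀ i, Δ i = δ + h • ∑ j, a i j • dk j)
    (hμ : μ' = μ + h • ∑ i, B i • l i) (hΛ : ∀ i, Λ i = μ + h • ∑ j, A i j • l j) :
    μ' ⬝ᵥ δ' - μ ⬝ᵥ δ = h * ∑ i, (b i * (Λ i ⬝ᵥ dk i) + B i * (l i ⬝ᵥ Δ i))
      + h ^ 2 * ∑ i, ∑ j, (B i * b j - b j * A j i - B i * a i j) * (l i ⬝ᵥ dk j) := by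
  have hΛdk : ∀ i, Λ i ⬝ᵥ dk i = μ ⬝ᵥ dk i + h * ∑ j, A i j * (l j ⬝ᵥ dk i) := fun i => by
    rw [hΛ, add_dotProduct, smul_dotProduct, sum_smul_dotProduct, smul_eq_mul]
  have hlΔ : ∀ i, l i ⬝ᵥ Δ i = l i ⬝ᵥ δ + h * ∑ j, a i j * (l i ⬝ᵥ dk j) := fun i => by
    rw [hΔ, dotProduct_add, dotProduct_smul, dotProduct_sum_smul, smul_eq_mul]
  have hA : ∑ i, ∑ j, b j * A j i * (l i ⬝ᵥ dk j) = ∑ i, b i * ∑ j, A i j * (l j ⬝ᵥ dk i) := by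
    rw [sum_comm]; simp only [mul_sum, mul_assoc]
  have ha : ∑ i, ∑ j, B i * a i j * (l i ⬝ᵥ dk j) = ∑ i, B i * ∑ j, a i j * (l i ⬝ᵥ dk j) := by
    simp only [mul_sum, mul_assoc]
  rw [hμ, hδ, add_smul_dotProduct_add_smul, sum_smul_dotProduct_sum_smul, dotProduct_sum_smul,
    sum_smul_dotProduct]
  simp only [hΛdk, hlΔ, sub_mul, sum_sub_distrib, hA, ha, mul_add, sum_add_distrib,
    mul_left_comm _ h, ← mul_sum]
  ring

end

/-- One RK step for the variational system and one RK step for the adjoint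
system with coefficients satisfying the adjointness conditions conserve the
inner product `λ ⬝ᵥ δ`. -/
theorem rk_adjoint_step_conserves
    (d s : ℕ) (h : ℝ)
    (a A : Fin s → Fin s → ℝ) (b B : Fin s → ℝ)
    (J : Fin s → Matrix (Fin d) (Fin d) ℝ)
    (δn δn1 lamn lamn1 : Fin d → ℝ)
    (dk Δ l Λ : Fin s → (Fin d → ℝ))
    (hδ : δn1 = δn + h • ∑ i, b i • dk i)
    (hd : ∀ i, dk i = (J i).mulVec (Δ i))
    (hΔ : ∀ i, Δ i = δn + h • ∑ j, a i j • dk j)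
    (hlam : lamn1 = lamn + h • ∑ i, B i • l i)
    (hl : ∀ i, l i = -((J i).transpose.mulVec (Λ i)))
    (hΛ : ∀ i, Λ i = lamn + h • ∑ j, A i j • l j)
    (hB : ∀ i, B i = b i)
    (hAB : ∀ i j, b i * A i j + B j * a j i = b i * B j) :
    dotProduct lamn1 δn1 = dotProduct lamn δn := by
  have hstage : ∀ i, b i * (Λ i ⬝ᵥ dk i) + B i * (l i ⬝ᵥ Δ i) = 0 := fun i => by
    rw [hB, hd, hl, neg_dotProduct, mulVec_transpose, ← dotProduct_mulVec, mul_neg,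
      add_neg_cancel]
  have hcoef : ∀ i j, B i * b j - b j * A j i - B i * a i j = 0 := fun i j => by
    linarith [hAB j i]
  have hstep := dotProduct_rk_step_sub h a A b B δn δn1 lamn lamn1 dk Δ l Λ hδ hΔ hlam hΛ
  simp only [hstage, hcoef, zero_mul, sum_const_zero, mul_zero, add_zero] at hstep
  exact sub_eq_zero.mp hstep
end

section
/- Consider one step of a partitioned RK method applied to the variational system of a partitioned ODE: δ_{n+1}^{[k]} = δ_n^{[k]} + h Σ_i b_i^{[k]} m_i^{[k]} (k=1,2) with m_i^{[1]} = J_i^{11} D_i^{[1]} + J_i^{12} D_i^{[2]}, m_i^{[2]} = J_i^{21} D_i^{[1]} + J_i^{22} D_i^{[2]}, D_i^{[k]} = δ_n^{[k]} + h Σ_j a_{ij}^{[k]} m_j^{[k]}; and one step of the generalized PRK method for the adjoint: λ_{n+1}^{[1]} = λ_n^{[1]} - h Σ_i (B_i^{[11]} l_i^{[11]} + B_i^{[12]} l_i^{[12]}), λ_{n+1}^{[2]} = λ_n^{[2]} - h Σ_i (B_i^{[21]} l_i^{[21]} + B_i^{[22]} l_i^{[22]}), with l_i^{[11]} = (J_i^{11})^⊤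 Λ_i^{[1]}, l_i^{[12]} = (J_i^{21})^⊤ Λ_i^{[2]}, l_i^{[21]} = (J_i^{12})^⊤ Λ_i^{[1]}, l_i^{[22]} = (J_i^{22})^⊤ Λ_i^{[2]}, Λ_i^{[1]} = λ_n^{[1]} - h Σ_j (A_{ij}^{[11]} l_j^{[11]} + A_{ij}^{[12]} l_j^{[12]}), Λ_i^{[2]} = λ_n^{[2]} - h Σ_j (A_{ij}^{[21]} l_j^{[21]} + A_{ij}^{[22]} l_j^{[22]}). If b_i^{[1]} = B_i^{[11]} = B_i^{[21]}, b_i^{[2]} = B_i^{[12]} = B_i^{[22]}, b_i^{[1]} A_{ij}^{[11]} + B_j^{[11]} a_{ji}^{[1]} = b_i^{[1]} B_j^{[11]}, b_i^{[1]} A_{ij}^{[12]} + B_j^{[12]} a_{ji}^{[1]} = b_i^{[1]} B_j^{[12]}, b_i^{[2]} A_{ij}^{[21]} + B_j^{[21]} a_{ji}^{[2]} = b_i^{[2]} B_j^{[21]}, and b_i^{[2]} A_{ij}^{[22]} + B_j^{[22]} a_{ji}^{[2]} = b_i^{[2]} B_j^{[22]} for all i,j, then (λ_{n+1}^{[1]})^⊤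 δ_{n+1}^{[1]} + (λ_{n+1}^{[2]})^⊤ δ_{n+1}^{[2]} = (λ_n^{[1]})^⊤ δ_n^{[1]} + (λ_n^{[2]})^⊤ δ_n^{[2]}. -/
/-!
Pair the PRK step for `δ` with the GPRK step for `λ` block by block. Expanding bilinearly and
substituting the internal stages, block `k` changes `λᵀδ` by
`h ∑ᵢ (bᵢ Λᵢᵀ mᵢ - ∑ₗ Bᵢ^{[kl]} (lᵢ^{[kl]})ᵀ Dᵢ)` plus an `h²` term, which vanishes by the
conditions `bᵢ Aᵢⱼ + Bⱼ aⱼᵢ = bᵢ Bⱼ` once the stage indices `i, j` are exchanged. When the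
`B`'s equal the `b`'s, the stage terms of the two blocks cancel because `Λᵀ (J D) = (Jᵀ Λ)ᵀ D`,
the stagewise form of the conservation of `λᵀδ` along the variational and adjoint flows.
-/
open Finset Matrix

section Pairing

variable {R M N ι κ : Type*} [CommRing R] [AddCommGroup M] [Module R M] [AddCommGroup N]
  [Module R N] [Fintype ι] [Fintype κ]

theorem sum_sum_sum_eq_of_adjoint (a : ι → ι → R) (b : ι → R) (A : κ → ι → ι → R)
    (B : κ → ι → R) (hAB : ∀ k i j, b i * A k i j + B k j * a j i = b i * B k j)
    (X : κ → ι → ι → R) :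
    ∑ i, ∑ j, ∑ k, b i * B k j * X k j i
      = ∑ i, ∑ j, ∑ k, b i * A k i j * X k j i + ∑ i, ∑ k, ∑ j, B k i * a i j * X k i j := by
  simp_rw [Finset.sum_comm (s := (univ : Finset κ)) (t := (univ : Finset ι))]
  rw [Finset.sum_comm (f := fun i j => ∑ k, B k i * a i j * X k i j)]
  simp only [← sum_add_distrib]
  refine sum_congr rfl fun i _ => sum_congr rfl fun j _ => sum_congr rfl fun k _ => ?_
  linear_combination (-X k j i) * hAB k i j

theorem pairing_prk_gprk_step (β : M →ₗ[R] N →ₗ[R] R) (h : R) (a : ι → ι → R) (b : ι → R)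
    (A : κ → ι → ι → R) (B : κ → ι → R)
    (hAB : ∀ k i j, b i * A k i j + B k j * a j i = b i * B k j)
    {δ δ' : N} {m D : ι → N} {lam lam' : M} {l : κ → ι → M} {Λ : ι → M}
    (hδ' : δ' = δ + h • ∑ i, b i • m i) (hD : ∀ i, D i = δ + h • ∑ j, a i j • m j)
    (hlam' : lam' = lam - h • ∑ i, ∑ k, B k i • l k i)
    (hΛ : ∀ i, Λ i = lam - h • ∑ j, ∑ k, A k i j • l k j) :
    β lam' δ' = β lam δ + h * ∑ i, (b i * β (Λ i) (m i) - ∑ k, B k i * β (l k i) (D i)) := by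
  obtain rfl := funext hD
  obtain rfl := funext hΛ
  subst hδ' hlam'
  have key := congrArg (h * h * ·)
    (sum_sum_sum_eq_of_adjoint a b A B hAB fun k i j => β (l k i) (m j))
  simp only [map_add, map_sub, map_smul, map_sum, LinearMap.sub_apply, LinearMap.smul_apply,
    LinearMap.sum_apply, smul_eq_mul] at key ⊢
  simp only [mul_add, mul_sub, sum_add_distrib, sum_sub_distrib, mul_sum] at key ⊢
  -- `linear_combination` cannot look under binders, so the summands are AC-normalised first
  simp only [mul_assoc, mul_comm, mul_left_comm] at key ⊢
  linear_combination -key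

end Pairing

theorem Matrix.dotProduct_mulVec_add_mulVec {R m n₁ n₂ : Type*} [CommSemiring R] [Fintype m]
    [Fintype n₁] [Fintype n₂] (v : m → R) (J₁ : Matrix m n₁ R) (J₂ : Matrix m n₂ R)
    (w₁ : n₁ → R) (w₂ : n₂ → R) :
    v ⬝ᵥ (J₁ *ᵥ w₁ + J₂ *ᵥ w₂) = (J₁ᵀ *ᵥ v) ⬝ᵥ w₁ + (J₂ᵀ *ᵥ v) ⬝ᵥ w₂ := by
  rw [dotProduct_add, dotProduct_mulVec, dotProduct_mulVec, mulVec_transpose, mulVec_transpose]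

/-- One step of a PRK method for the variational system of a partitioned ODE
together with one step of a generalized PRK (GPRK) method for the adjoint
system, with coefficients satisfying the GPRK adjointness conditions, conserve
`(λ¹)ᵀδ¹ + (λ²)ᵀδ²`. -/
theorem gprk_adjoint_step_conserves
    (d₁ d₂ s : ℕ) (h : ℝ)
    (a1 a2 : Fin s → Fin s → ℝ) (b1 b2 : Fin s → ℝ)
    (A11 A12 A21 A22 : Fin s → Fin s → ℝ) (B11 B12 B21 B22 : Fin s → ℝ)
    (J11 : Fin s → Matrix (Fin d₁) (Fin d₁) ℝ)
    (J12 : Fin s → Matrix (Fin d₁) (Fin d₂) ℝ)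
    (J21 : Fin s → Matrix (Fin d₂) (Fin d₁) ℝ)
    (J22 : Fin s → Matrix (Fin d₂) (Fin d₂) ℝ)
    (δ1n δ1n1 lam1n lam1n1 : Fin d₁ → ℝ) (δ2n δ2n1 lam2n lam2n1 : Fin d₂ → ℝ)
    (m1 D1 : Fin s → (Fin d₁ → ℝ)) (m2 D2 : Fin s → (Fin d₂ → ℝ))
    (l11 l12 Λ1 : Fin s → (Fin d₁ → ℝ)) (l21 l22 Λ2 : Fin s → (Fin d₂ → ℝ))
    -- PRK step for the variational system
    (hδ1 : δ1n1 = δ1n + h • ∑ i, b1 i • m1 i)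
    (hδ2 : δ2n1 = δ2n + h • ∑ i, b2 i • m2 i)
    (hm1 : ∀ i, m1 i = (J11 i).mulVec (D1 i) + (J12 i).mulVec (D2 i))
    (hm2 : ∀ i, m2 i = (J21 i).mulVec (D1 i) + (J22 i).mulVec (D2 i))
    (hD1 : ∀ i, D1 i = δ1n + h • ∑ j, a1 i j • m1 j)
    (hD2 : ∀ i, D2 i = δ2n + h • ∑ j, a2 i j • m2 j)
    -- GPRK step for the adjoint system
    (hlam1 : lam1n1 = lam1n - h • ∑ i, (B11 i • l11 i + B12 i • l12 i))
    (hlam2 : lam2n1 = lam2n - h • ∑ i, (B21 i • l21 i + B22 i • l22 i))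
    (hl11 : ∀ i, l11 i = (J11 i).transpose.mulVec (Λ1 i))
    (hl12 : ∀ i, l12 i = (J21 i).transpose.mulVec (Λ2 i))
    (hl21 : ∀ i, l21 i = (J12 i).transpose.mulVec (Λ1 i))
    (hl22 : ∀ i, l22 i = (J22 i).transpose.mulVec (Λ2 i))
    (hΛ1 : ∀ i, Λ1 i = lam1n - h • ∑ j, (A11 i j • l11 j + A12 i j • l12 j))
    (hΛ2 : ∀ i, Λ2 i = lam2n - h • ∑ j, (A21 i j • l21 j + A22 i j • l22 j))
    -- GPRK adjointness conditions
    (hB1 : ∀ i, b1 i = B11 i ∧ b1 i = B21 i)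
    (hB2 : ∀ i, b2 i = B12 i ∧ b2 i = B22 i)
    (hA11 : ∀ i j, b1 i * A11 i j + B11 j * a1 j i = b1 i * B11 j)
    (hA12 : ∀ i j, b1 i * A12 i j + B12 j * a1 j i = b1 i * B12 j)
    (hA21 : ∀ i j, b2 i * A21 i j + B21 j * a2 j i = b2 i * B21 j)
    (hA22 : ∀ i j, b2 i * A22 i j + B22 j * a2 j i = b2 i * B22 j) :
    dotProduct lam1n1 δ1n1 + dotProduct lam2n1 δ2n1
      = dotProduct lam1n δ1n + dotProduct lam2n δ2n := by
  have block1 := pairing_prk_gprk_step (dotProductBilin ℝ ℝ) h a1 b1 ![A11, A12] ![B11, B12]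
    (l := ![l11, l12]) (Fin.forall_fin_two.2 ⟨hA11, hA12⟩) hδ1 hD1
    (by simpa [Fin.sum_univ_two] using hlam1) (by simpa [Fin.sum_univ_two] using hΛ1)
  have block2 := pairing_prk_gprk_step (dotProductBilin ℝ ℝ) h a2 b2 ![A21, A22] ![B21, B22]
    (l := ![l21, l22]) (Fin.forall_fin_two.2 ⟨hA21, hA22⟩) hδ2 hD2
    (by simpa [Fin.sum_univ_two] using hlam2) (by simpa [Fin.sum_univ_two] using hΛ2)
  simp only [dotProductBilin_apply_apply, Fin.sum_univ_two, cons_val_zero, cons_val_one]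
    at block1 block2
  have hstage : ∀ i, (b1 i * Λ1 i ⬝ᵥ m1 i - (B11 i * l11 i ⬝ᵥ D1 i + B12 i * l12 i ⬝ᵥ D1 i))
      + (b2 i * Λ2 i ⬝ᵥ m2 i - (B21 i * l21 i ⬝ᵥ D2 i + B22 i * l22 i ⬝ᵥ D2 i)) = 0 := by
    intro i
    rw [hm1, hm2, dotProduct_mulVec_add_mulVec, dotProduct_mulVec_add_mulVec, ← hl11, ← hl12,
      ← hl21, ← hl22, ← (hB1 i).1, ← (hB1 i).2, ← (hB2 i).1, ← (hB2 i).2]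
    ring
  linear_combination block1 + block2
    + h * (sum_add_distrib.symm.trans (sum_eq_zero fun i _ => hstage i))
end

section
/- Suppose b^{[1]}_i and b^{[2]}_i are all nonzero. Then the conditions of the GPRK adjoint theorem uniquely determine the coefficients: B^{[11]} = B^{[21]} = b^{[1]}, B^{[12]} = B^{[22]} = b^{[2]}, A_{ij}^{[11]} = b_j^{[1]} - (b_j^{[1]}/b_i^{[1]}) a_{ji}^{[1]}, A_{ij}^{[12]} = b_j^{[2]} - (b_j^{[2]}/b_i^{[1]}) a_{ji}^{[1]}, A_{ij}^{[21]} = b_j^{[1]} - (b_j^{[1]}/b_i^{[2]}) a_{ji}^{[2]}, A_{ij}^{[22]} = b_j^{[2]} - (b_j^{[2]}/b_i^{[2]}) a_{ji}^{[2]}. -/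
/-- When all PRK weights are nonzero, the GPRK adjointness conditions uniquely
determine the GPRK coefficients, which are given by explicit formulas. -/
theorem gprk_coefficients_unique
    (s : ℕ) (a1 a2 : Fin s → Fin s → ℝ) (b1 b2 : Fin s → ℝ)
    (hb1 : ∀ i, b1 i ≠ 0) (hb2 : ∀ i, b2 i ≠ 0)
    (A11 A12 A21 A22 : Fin s → Fin s → ℝ) (B11 B12 B21 B22 : Fin s → ℝ)
    (hB1 : ∀ i, b1 i = B11 i ∧ b1 i = B21 i)
    (hB2 : ∀ i, b2 i = B12 i ∧ b2 i = B22 i)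
    (hA11 : ∀ i j, b1 i * A11 i j + B11 j * a1 j i = b1 i * B11 j)
    (hA12 : ∀ i j, b1 i * A12 i j + B12 j * a1 j i = b1 i * B12 j)
    (hA21 : ∀ i j, b2 i * A21 i j + B21 j * a2 j i = b2 i * B21 j)
    (hA22 : ∀ i j, b2 i * A22 i j + B22 j * a2 j i = b2 i * B22 j) :
    (∀ i, B11 i = b1 i ∧ B21 i = b1 i ∧ B12 i = b2 i ∧ B22 i = b2 i) ∧
    (∀ i j, A11 i j = b1 j - (b1 j / b1 i) * a1 j i) ∧
    (∀ i j, A12 i j = b2 j - (b2 j / b1 i) * a1 j i) ∧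
    (∀ i j, A21 i j = b1 j - (b1 j / b2 i) * a2 j i) ∧
    (∀ i j, A22 i j = b2 j - (b2 j / b2 i) * a2 j i) := by
  refine ⟨fun i => ⟨(hB1 i).1.symm, (hB1 i).2.symm, (hB2 i).1.symm, (hB2 i).2.symm⟩,
    ?_, ?_, ?_, ?_⟩ <;> intro i j
  · have h := hA11 i j; rw [← (hB1 j).1] at h
    field_simp [hb1 i]; linarith
  · have h := hA12 i j; rw [← (hB2 j).1] at h
    field_simp [hb1 i]; linarith
  · have h := hA21 i j; rw [← (hB1 j).2] at h
    field_simp [hb2 i]; linarith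
  · have h := hA22 i j; rw [← (hB2 j).2] at h
    field_simp [hb2 i]; linarith
end

section
/- If b^{[1]} = b^{[2]} =: b (all components nonzero) and the PRK method is symplectic in the sense that b_i a_{ij}^{[2]} + b_j a_{ji}^{[1]} = b_i b_j for all i, j, then the unique GPRK coefficients determined by the conditions of the GPRK adjoint theorem satisfy B^{[11]} = B^{[21]} = B^{[12]} = B^{[22]} = b, A^{[11]} = A^{[12]} = a^{[2]}, and A^{[21]} = A^{[22]} = a^{[1]}; in particular the GPRK method reduces to a partitioned RK method (A^{[11]} = A^{[12]} and A^{[21]} = A^{[22]}, B^{[11]} = B^{[12]} and B^{[21]} = B^{[22]}). -/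
/-- If `b¹ = b² = b` (nonzero) and the PRK method is symplectic
(`bᵢ a²ᵢⱼ + bⱼ a¹ⱼᵢ = bᵢ bⱼ`), then the GPRK coefficients determined by the
GPRK adjointness conditions satisfy `B¹¹ = B²¹ = B¹² = B²² = b`,
`A¹¹ = A¹² = a²`, `A²¹ = A²² = a¹`; in particular the GPRK method reduces to a
partitioned RK method. -/
theorem gprk_symplectic_reduces_to_prk
    (s : ℕ) (a1 a2 : Fin s → Fin s → ℝ) (b : Fin s → ℝ)
    (hb : ∀ i, b i ≠ 0)
    (hsymp : ∀ i j, b i * a2 i j + b j * a1 j i = b i * b j)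
    (A11 A12 A21 A22 : Fin s → Fin s → ℝ) (B11 B12 B21 B22 : Fin s → ℝ)
    (hB1 : ∀ i, b i = B11 i ∧ b i = B21 i)
    (hB2 : ∀ i, b i = B12 i ∧ b i = B22 i)
    (hA11 : ∀ i j, b i * A11 i j + B11 j * a1 j i = b i * B11 j)
    (hA12 : ∀ i j, b i * A12 i j + B12 j * a1 j i = b i * B12 j)
    (hA21 : ∀ i j, b i * A21 i j + B21 j * a2 j i = b i * B21 j)
    (hA22 : ∀ i j, b i * A22 i j + B22 j * a2 j i = b i * B22 j) :
    (B11 = b ∧ B21 = b ∧ B12 = b ∧ B22 = b) ∧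
    (A11 = a2 ∧ A12 = a2 ∧ A21 = a1 ∧ A22 = a1) ∧
    (A11 = A12 ∧ A21 = A22 ∧ B11 = B12 ∧ B21 = B22) := by
  have hB11 : B11 = b := funext fun i => ((hB1 i).1).symm
  have hB21 : B21 = b := funext fun i => ((hB1 i).2).symm
  have hB12 : B12 = b := funext fun i => ((hB2 i).1).symm
  have hB22 : B22 = b := funext fun i => ((hB2 i).2).symm
  rw [hB11] at hA11; rw [hB21] at hA21; rw [hB12] at hA12; rw [hB22] at hA22
  have h2 : ∀ (A : Fin s → Fin s → ℝ),
      (∀ i j, b i * A i j + b j * a1 j i = b i * b j) → A = a2 := by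
    intro A hA
    funext i j
    have h := hsymp i j
    have h' := hA i j
    have : b i * A i j = b i * a2 i j := by linarith
    exact mul_left_cancel₀ (hb i) this
  have h1 : ∀ (A : Fin s → Fin s → ℝ),
      (∀ i j, b i * A i j + b j * a2 j i = b i * b j) → A = a1 := by
    intro A hA
    funext i j
    have h := hsymp j i
    have h' := hA i j
    have : b i * A i j = b i * a1 i j := by linarith [mul_comm (b i) (b j)]
    exact mul_left_cancel₀ (hb i) this
  have e11 := h2 A11 hA11
  have e12 := h2 A12 hA12
  have e21 := h1 A21 hA21
  have e22 := h1 A22 hA22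
  exact ⟨⟨hB11, hB21, hB12, hB22⟩, ⟨e11, e12, e21, e22⟩, by rw [e11, e12], by rw [e21, e22], by rw [hB11, hB12], by rw [hB21, hB22]⟩
end

section
/- Consider a spatially partitioned embedded RK method with a^{[1]} = a^{[2]} = a and weights b^{[1]} ≠ b^{[2]} (all components nonzero). The unique GPRK coefficients from the GPRK adjoint theorem are B^{[11]} = B^{[21]} = b^{[1]}, B^{[12]} = B^{[22]} = b^{[2]}, A_{ij}^{[11]} = b_j^{[1]} - (b_j^{[1]}/b_i^{[1]}) a_{ji}, A_{ij}^{[12]} = b_j^{[2]} - (b_j^{[2]}/b_i^{[1]}) a_{ji}, A_{ij}^{[21]} = b_j^{[1]} - (b_j^{[1]}/b_i^{[2]}) a_{ji}, A_{ij}^{[22]} = b_j^{[2]} - (b_j^{[2]}/b_i^{[2]}) a_{ji}, and these satisfy all six GPRK adjointness conditions. -/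
/-- For a spatially partitioned embedded RK method (`a¹ = a² = a`,
`b¹ ≠ b²`, all weights nonzero), the explicit GPRK coefficient formulas satisfy
all six GPRK adjointness conditions, and any coefficients satisfying those
conditions are given by the formulas. -/
theorem gprk_spatially_partitioned_embedded
    (s : ℕ) (a : Fin s → Fin s → ℝ) (b1 b2 : Fin s → ℝ)
    (hb1 : ∀ i, b1 i ≠ 0) (hb2 : ∀ i, b2 i ≠ 0) (hne : b1 ≠ b2) :
    -- the explicit formulas satisfy the six GPRK adjointness conditions
    ((∀ i, b1 i = b1 i ∧ b1 i = b1 i) ∧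
     (∀ i, b2 i = b2 i ∧ b2 i = b2 i) ∧
     (∀ i j, b1 i * (b1 j - (b1 j / b1 i) * a j i) + b1 j * a j i = b1 i * b1 j) ∧
     (∀ i j, b1 i * (b2 j - (b2 j / b1 i) * a j i) + b2 j * a j i = b1 i * b2 j) ∧
     (∀ i j, b2 i * (b1 j - (b1 j / b2 i) * a j i) + b1 j * a j i = b2 i * b1 j) ∧
     (∀ i j, b2 i * (b2 j - (b2 j / b2 i) * a j i) + b2 j * a j i = b2 i * b2 j)) ∧
    -- and the conditions uniquely determine the coefficients
    (∀ (A11 A12 A21 A22 : Fin s → Fin s → ℝ) (B11 B12 B21 B22 : Fin s → ℝ),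
      (∀ i, b1 i = B11 i ∧ b1 i = B21 i) →
      (∀ i, b2 i = B12 i ∧ b2 i = B22 i) →
      (∀ i j, b1 i * A11 i j + B11 j * a j i = b1 i * B11 j) →
      (∀ i j, b1 i * A12 i j + B12 j * a j i = b1 i * B12 j) →
      (∀ i j, b2 i * A21 i j + B21 j * a j i = b2 i * B21 j) →
      (∀ i j, b2 i * A22 i j + B22 j * a j i = b2 i * B22 j) →
      (∀ i, B11 i = b1 i ∧ B21 i = b1 i ∧ B12 i = b2 i ∧ B22 i = b2 i) ∧
      (∀ i j, A11 i j = b1 j - (b1 j / b1 i) * a j i) ∧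
      (∀ i j, A12 i j = b2 j - (b2 j / b1 i) * a j i) ∧
      (∀ i j, A21 i j = b1 j - (b1 j / b2 i) * a j i) ∧
      (∀ i j, A22 i j = b2 j - (b2 j / b2 i) * a j i)) := by
  constructor
  · refine ⟨fun i => ⟨rfl, rfl⟩, fun i => ⟨rfl, rfl⟩, ?_, ?_, ?_, ?_⟩ <;>
      intro i j <;> field_simp [hb1 i, hb2 i] <;> ring
  · intro A11 A12 A21 A22 B11 B12 B21 B22 h1 h2 e11 e12 e21 e22
    have hB11 : ∀ i, B11 i = b1 i := fun i => ((h1 i).1).symm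
    have hB21 : ∀ i, B21 i = b1 i := fun i => ((h1 i).2).symm
    have hB12 : ∀ i, B12 i = b2 i := fun i => ((h2 i).1).symm
    have hB22 : ∀ i, B22 i = b2 i := fun i => ((h2 i).2).symm
    refine ⟨fun i => ⟨hB11 i, hB21 i, hB12 i, hB22 i⟩, ?_, ?_, ?_, ?_⟩ <;> intro i j
    · have := e11 i j; rw [hB11 j] at this
      field_simp [hb1 i, hb2 i]
      linear_combination this
    · have := e12 i j; rw [hB12 j] at this
      field_simp [hb1 i, hb2 i]
      linear_combination this
    · have := e21 i j; rw [hB21 j] at this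
      field_simp [hb1 i, hb2 i]
      linear_combination this
    · have := e22 i j; rw [hB22 j] at this
      field_simp [hb1 i, hb2 i]
      linear_combination this
end

section
/- In the separable case where the stage Jacobian blocks J_i^{11} and J_i^{22} vanish (f^{[1]} depends only on x^{[2]} and f^{[2]} only on x^{[1]}), the GPRK stage values satisfy l_i^{[11]} = 0 and l_i^{[22]} = 0 for all i, and hence the GPRK update for λ reduces to a partitioned RK method with coefficients B^{[21]} = b^{[1]}, B^{[12]} = b^{[2]}, A^{[12]} = a^{[2]}, A^{[21]} = a^{[1]} whenever the original PRK method satisfies the separable symplecticity condition b_i^{[1]} a_{ij}^{[2]} + b_j^{[2]} a_{ji}^{[1]} = b_i^{[1]} b_j^{[2]} and all weights are nonzero. -/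
/-- In the separable case (`J¹¹ᵢ = 0`, `J²²ᵢ = 0`), the GPRK stage values
satisfy `l¹¹ᵢ = 0` and `l²²ᵢ = 0`, and under the separable symplecticity
condition `b¹ᵢ a²ᵢⱼ + b²ⱼ a¹ⱼᵢ = b¹ᵢ b²ⱼ` (with nonzero weights) the unique
GPRK coefficients reduce to the PRK method with `B²¹ = b¹`, `B¹² = b²`,
`A¹² = a²`, `A²¹ = a¹`. -/
theorem gprk_separable_reduction
    (d₁ d₂ s : ℕ) (h : ℝ)
    (a1 a2 : Fin s → Fin s → ℝ) (b1 b2 : Fin s → ℝ)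
    (hb1 : ∀ i, b1 i ≠ 0) (hb2 : ∀ i, b2 i ≠ 0)
    (hsymp : ∀ i j, b1 i * a2 i j + b2 j * a1 j i = b1 i * b2 j)
    (J11 : Fin s → Matrix (Fin d₁) (Fin d₁) ℝ)
    (J12 : Fin s → Matrix (Fin d₁) (Fin d₂) ℝ)
    (J21 : Fin s → Matrix (Fin d₂) (Fin d₁) ℝ)
    (J22 : Fin s → Matrix (Fin d₂) (Fin d₂) ℝ)
    (hJ11 : ∀ i, J11 i = 0) (hJ22 : ∀ i, J22 i = 0)
    (l11 Λ1 : Fin s → (Fin d₁ → ℝ)) (l22 Λ2 : Fin s → (Fin d₂ → ℝ))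
    (hl11 : ∀ i, l11 i = (J11 i).transpose.mulVec (Λ1 i))
    (hl22 : ∀ i, l22 i = (J22 i).transpose.mulVec (Λ2 i)) :
    (∀ i, l11 i = 0) ∧ (∀ i, l22 i = 0) ∧
    -- the unique GPRK coefficients `A¹²ᵢⱼ = b²ⱼ - (b²ⱼ/b¹ᵢ) a¹ⱼᵢ` and
    -- `A²¹ᵢⱼ = b¹ⱼ - (b¹ⱼ/b²ᵢ) a²ⱼᵢ` coincide with `a²` and `a¹`
    (∀ i j, b2 j - (b2 j / b1 i) * a1 j i = a2 i j) ∧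
    (∀ i j, b1 j - (b1 j / b2 i) * a2 j i = a1 i j) := by
  refine ⟨fun i => ?_, fun i => ?_, fun i j => ?_, fun i j => ?_⟩
  · simp [hl11 i, hJ11 i, Matrix.mulVec]
  · simp [hl22 i, hJ22 i, Matrix.mulVec]
  · have := hsymp i j
    rw [div_mul_eq_mul_div, sub_eq_iff_eq_add]
    field_simp [hb1 i, hb2 i]
    linarith [this]
  · have := hsymp j i
    rw [div_mul_eq_mul_div, sub_eq_iff_eq_add]
    field_simp [hb1 i, hb2 i]
    linarith [this]
end
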